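/- With 𝒢, K, ⋄ and θ as in the context, the set 𝒢 ⊠_θ K = {(g,χ) : g ∈ 𝒢, χ ∈ K_{s(g)}}, with (g,χ) and (h,ν) composable iff s(g) = r(h), product (g,χ)(h,ν) = (gh, θ(g,h)·((h⁻¹)⋄χ)·ν), and inverse (g,χ)⁻¹ = (g⁻¹, θ(g,g⁻¹)⁻¹·(g⋄χ⁻¹)), is a groupoid: the product is associative wherever defined, (g,χ)·(g,χ)⁻¹·(g,χ) = (g,χ) for all (g,χ), the unit space of 𝒢 ⊠_θ K is {(x, 1_{K_x}) : x ∈ X} (which may be identified with X), and under this identification the range and source maps are r(g,χ) = r(g) and s(g,χ) = s(g). -/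

import Mathlib

universe u v w

/-- A groupoid, presented by its set of arrows `H` and its unit space `U`: range and source
maps `r, s : H → U`, a (totalized) partially-defined multiplication which is only meaningful on
composable pairs (`s g = r h`), inversion, and the embedding `unit : U → H` of units. -/
structure RawGroupoid (H : Type u) (U : Type v) where
  r : H → U
  s : H → U
  mul : H → H → H
  inv : H → H
  unit : U → H
  r_unit : ∀ x, r (unit x) = x
  s_unit : ∀ x, s (unit x) = x
  r_mul : ∀ g h, s g = r h → r (mul g h) = r g
  s_mul : ∀ g h, s g = r h → s (mul g h) = s h
  r_inv : ∀ g, r (inv g) = s g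
  s_inv : ∀ g, s (inv g) = r g
  inv_inv : ∀ g, inv (inv g) = g
  mul_assoc : ∀ g h k, s g = r h → s h = r k → mul (mul g h) k = mul g (mul h k)
  unit_mul : ∀ g, mul (unit (r g)) g = g
  mul_unit : ∀ g, mul g (unit (s g)) = g
  inv_mul : ∀ g, mul (inv g) g = unit (s g)
  mul_inv : ∀ g, mul g (inv g) = unit (r g)

/-- A bundle of abelian groups: a surjection `p : K → X` together with a fibrewise abelian
group structure (the multiplication is totalized; it is only meaningful within a fibre). -/
structure AbGroupBundle (K : Type u) (X : Type v) where
  p : K → X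
  p_surj : Function.Surjective p
  e : X → K
  bmul : K → K → K
  binv : K → K
  p_e : ∀ x, p (e x) = x
  p_bmul : ∀ s t, p s = p t → p (bmul s t) = p t
  p_binv : ∀ t, p (binv t) = p t
  bmul_assoc : ∀ s t u, p s = p t → p t = p u → bmul (bmul s t) u = bmul s (bmul t u)
  bmul_comm : ∀ s t, p s = p t → bmul s t = bmul t s
  e_bmul : ∀ t, bmul (e (p t)) t = t
  binv_bmul : ∀ t, bmul (binv t) t = e (p t)

section Box

open scoped Classical

variable {Hm : Type u} {X : Type v} {K : Type w}

/-- The underlying set `𝒢 ⊠_θ K = {(g, χ) : g ∈ 𝒢, χ ∈ K_{s(g)}}`. -/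
def BoxW (Gg : RawGroupoid Hm X) (KB : AbGroupBundle K X) : Type max u w :=
  {q : Hm × K // KB.p q.2 = Gg.s q.1}

/-- The product `(g,χ)(h,ν) = (gh, θ(g,h)·((h⁻¹)⋄χ)·ν)` on `𝒢 ⊠_θ K` (for composable pairs;
junk value otherwise). -/
noncomputable def boxMul (Gg : RawGroupoid Hm X) (KB : AbGroupBundle K X)
    (act : Hm → K → K) (θ : Hm → Hm → K) (a b : BoxW Gg KB) : BoxW Gg KB :=
  if h : Gg.s a.val.1 = Gg.r b.val.1 ∧
      KB.p (KB.bmul (KB.bmul (θ a.val.1 b.val.1) (act (Gg.inv b.val.1) a.val.2)) b.val.2) =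
        Gg.s (Gg.mul a.val.1 b.val.1) then
    ⟨(Gg.mul a.val.1 b.val.1,
      KB.bmul (KB.bmul (θ a.val.1 b.val.1) (act (Gg.inv b.val.1) a.val.2)) b.val.2),
      h.2⟩
  else a

/-- The inverse `(g,χ)⁻¹ = (g⁻¹, θ(g,g⁻¹)⁻¹·(g⋄χ⁻¹))` on `𝒢 ⊠_θ K`. -/
noncomputable def boxInv (Gg : RawGroupoid Hm X) (KB : AbGroupBundle K X)
    (act : Hm → K → K) (θ : Hm → Hm → K) (a : BoxW Gg KB) : BoxW Gg KB :=
  if h : KB.p (KB.bmul (KB.binv (θ a.val.1 (Gg.inv a.val.1))) (act a.val.1 (KB.binv a.val.2))) =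
      Gg.s (Gg.inv a.val.1) then
    ⟨(Gg.inv a.val.1,
      KB.bmul (KB.binv (θ a.val.1 (Gg.inv a.val.1))) (act a.val.1 (KB.binv a.val.2))),
      h⟩
  else a

end Box

/-! The laws are checked coordinatewise. In the first coordinate they are the laws of `𝒢`; the
second coordinate of each side is a product in a single fibre `K_x`, an abelian group, once the
action has been pushed through products and inverses. Associativity then is exactly the cocycle
identity, and the inverse laws need `θ(g,s(g)) = 1` and `θ(g⁻¹,g) = g⁻¹⋄θ(g,g⁻¹)`, which are the
cocycle identity at `(g, s(g), s(g))` and at `(g, g⁻¹, g)`. -/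

namespace RawGroupoid

variable {H : Type u} {U : Type v} (G : RawGroupoid H U)

theorem eq_inv_of_mul_eq_unit {g a : H} (hc : G.s g = G.r a)
    (h : G.mul g a = G.unit (G.r g)) : a = G.inv g :=
  calc a = G.mul (G.unit (G.s g)) a := by rw [hc, G.unit_mul]
    _ = G.mul (G.mul (G.inv g) g) a := by rw [G.inv_mul]
    _ = G.mul (G.inv g) (G.mul g a) := G.mul_assoc _ _ _ (G.s_inv g) hc
    _ = G.inv g := by rw [h, ← G.s_inv, G.mul_unit]

theorem unit_mul_unit (x : U) : G.mul (G.unit x) (G.unit x) = G.unit x := by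
  simpa only [G.s_unit] using G.mul_unit (G.unit x)

theorem inv_unit (x : U) : G.inv (G.unit x) = G.unit x :=
  (G.eq_inv_of_mul_eq_unit (by rw [G.s_unit, G.r_unit])
    (by rw [G.unit_mul_unit, G.r_unit])).symm

theorem mul_inv_rev {g h : H} (hc : G.s g = G.r h) :
    G.inv (G.mul g h) = G.mul (G.inv h) (G.inv g) := by
  have hc' : G.s (G.inv h) = G.r (G.inv g) := by rw [G.s_inv, G.r_inv, hc]
  have hgh : G.mul (G.mul g h) (G.inv h) = g := by
    rw [G.mul_assoc _ _ _ hc (G.r_inv h).symm, G.mul_inv, ← hc, G.mul_unit]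
  refine (G.eq_inv_of_mul_eq_unit ?_ ?_).symm
  · rw [G.s_mul _ _ hc, G.r_mul _ _ hc', G.r_inv]
  · rw [← G.mul_assoc _ _ _ (by rw [G.s_mul _ _ hc, G.r_inv]) hc', hgh, G.mul_inv,
      G.r_mul _ _ hc]

end RawGroupoid

namespace AbGroupBundle

variable {K : Type w} {X : Type v} (KB : AbGroupBundle K X)

abbrev Fiber (x : X) : Type w := {t : K // KB.p t = x}

noncomputable instance (x : X) : CommGroup (KB.Fiber x) where
  mul a b := ⟨KB.bmul a.1 b.1, by rw [KB.p_bmul _ _ (a.2.trans b.2.symm), b.2]⟩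
  one := ⟨KB.e x, KB.p_e x⟩
  inv a := ⟨KB.binv a.1, (KB.p_binv a.1).trans a.2⟩
  mul_assoc a b c := Subtype.ext (KB.bmul_assoc _ _ _ (a.2.trans b.2.symm) (b.2.trans c.2.symm))
  one_mul a := Subtype.ext (by have h := KB.e_bmul a.1; rwa [a.2] at h)
  mul_one a := Subtype.ext <| by
    have h := KB.e_bmul a.1
    rw [a.2, ← KB.bmul_comm _ _ (a.2.trans (KB.p_e x).symm)] at h
    exact h
  inv_mul_cancel a := Subtype.ext (by have h := KB.binv_bmul a.1; rwa [a.2] at h)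
  mul_comm a b := Subtype.ext (KB.bmul_comm _ _ (a.2.trans b.2.symm))

variable {KB} {x : X} {s t : K}

theorem p_bmul_of_eq (hs : KB.p s = x) (ht : KB.p t = x) : KB.p (KB.bmul s t) = x :=
  (KB.p_bmul s t (hs.trans ht.symm)).trans ht

theorem e_bmul_of_p_eq (ht : KB.p t = x) : KB.bmul (KB.e x) t = t :=
  congrArg Subtype.val (one_mul (⟨t, ht⟩ : KB.Fiber x))

theorem bmul_e_of_p_eq (ht : KB.p t = x) : KB.bmul t (KB.e x) = t :=
  congrArg Subtype.val (mul_one (⟨t, ht⟩ : KB.Fiber x))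

theorem bmul_binv_of_p_eq (ht : KB.p t = x) : KB.bmul t (KB.binv t) = KB.e x :=
  congrArg Subtype.val (mul_inv_cancel (⟨t, ht⟩ : KB.Fiber x))

theorem eq_e_of_bmul_self (ht : KB.p t = x) (h : KB.bmul t t = t) : t = KB.e x :=
  congrArg Subtype.val <|
    mul_eq_left.mp (Subtype.ext h : (⟨t, ht⟩ : KB.Fiber x) * ⟨t, ht⟩ = ⟨t, ht⟩)

theorem eq_binv_of_bmul_eq_e (hs : KB.p s = x) (ht : KB.p t = x)
    (h : KB.bmul s t = KB.e x) : t = KB.binv s :=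
  congrArg Subtype.val (eq_inv_of_mul_eq_one_right
    (Subtype.ext h : (⟨s, hs⟩ : KB.Fiber x) * ⟨t, ht⟩ = 1))

end AbGroupBundle

theorem mul_mul_mul_eq_of_mul_eq {G : Type*} [CommGroup G] {p q r s t u v : G}
    (h : q * p = u * v) : p * (q * r * s) * t = u * r * (v * s * t) :=
  calc p * (q * r * s) * t = q * p * (r * (s * t)) := by ac_rfl
    _ = u * v * (r * (s * t)) := by rw [h]
    _ = u * r * (v * s * t) := by ac_rfl

section TwistedProduct

variable {Hm : Type u} {X : Type v} {K : Type w}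

structure IsFiberwiseAction (Gg : RawGroupoid Hm X) (KB : AbGroupBundle K X)
    (act : Hm → K → K) : Prop where
  p_act : ∀ g χ, KB.p χ = Gg.s g → KB.p (act g χ) = Gg.r g
  act_bmul : ∀ g χ χ', KB.p χ = Gg.s g → KB.p χ' = Gg.s g →
    act g (KB.bmul χ χ') = KB.bmul (act g χ) (act g χ')
  act_mul : ∀ g h χ, Gg.s g = Gg.r h → KB.p χ = Gg.s h → act (Gg.mul g h) χ = act g (act h χ)
  act_unit : ∀ x χ, KB.p χ = x → act (Gg.unit x) χ = χ

structure IsTwistingCocycle (Gg : RawGroupoid Hm X) (KB : AbGroupBundle K X)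
    (act : Hm → K → K) (θ : Hm → Hm → K) : Prop where
  p_θ : ∀ g h, Gg.s g = Gg.r h → KB.p (θ g h) = Gg.s h
  θ_unit_left : ∀ g, θ (Gg.unit (Gg.r g)) g = KB.e (Gg.s g)
  cocycle : ∀ g h k, Gg.s g = Gg.r h → Gg.s h = Gg.r k →
    KB.bmul (act (Gg.inv k) (θ g h)) (θ (Gg.mul g h) k) = KB.bmul (θ g (Gg.mul h k)) (θ h k)

variable {Gg : RawGroupoid Hm X} {KB : AbGroupBundle K X} {act : Hm → K → K} {θ : Hm → Hm → K}

namespace IsFiberwiseAction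

theorem act_e (hact : IsFiberwiseAction Gg KB act) (g : Hm) :
    act g (KB.e (Gg.s g)) = KB.e (Gg.r g) := by
  have he : KB.p (KB.e (Gg.s g)) = Gg.s g := KB.p_e _
  refine AbGroupBundle.eq_e_of_bmul_self (hact.p_act g _ he) ?_
  rw [← hact.act_bmul g _ _ he he, AbGroupBundle.e_bmul_of_p_eq he]

theorem act_binv (hact : IsFiberwiseAction Gg KB act) {g : Hm} {χ : K} (hχ : KB.p χ = Gg.s g) :
    act g (KB.binv χ) = KB.binv (act g χ) := by
  have hχ' : KB.p (KB.binv χ) = Gg.s g := (KB.p_binv χ).trans hχ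
  refine AbGroupBundle.eq_binv_of_bmul_eq_e (hact.p_act g χ hχ) (hact.p_act g _ hχ') ?_
  rw [← hact.act_bmul g _ _ hχ hχ', AbGroupBundle.bmul_binv_of_p_eq hχ, hact.act_e]

theorem act_inv_act (hact : IsFiberwiseAction Gg KB act) {g : Hm} {χ : K}
    (hχ : KB.p χ = Gg.s g) : act (Gg.inv g) (act g χ) = χ := by
  rw [← hact.act_mul _ _ _ (Gg.s_inv g) hχ, Gg.inv_mul, hact.act_unit _ _ hχ]

end IsFiberwiseAction

namespace IsTwistingCocycle

theorem θ_unit_right (hact : IsFiberwiseAction Gg KB act) (hθ : IsTwistingCocycle Gg KB act θ)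
    (g : Hm) : θ g (Gg.unit (Gg.s g)) = KB.e (Gg.s g) := by
  have hc : Gg.s g = Gg.r (Gg.unit (Gg.s g)) := (Gg.r_unit _).symm
  have hp : KB.p (θ g (Gg.unit (Gg.s g))) = Gg.s g := by rw [hθ.p_θ g _ hc, Gg.s_unit]
  have h := hθ.cocycle g (Gg.unit (Gg.s g)) (Gg.unit (Gg.s g)) hc (by rw [Gg.s_unit, Gg.r_unit])
  have hθuu : θ (Gg.unit (Gg.s g)) (Gg.unit (Gg.s g)) = KB.e (Gg.s g) := by
    simpa only [Gg.r_unit, Gg.s_unit] using hθ.θ_unit_left (Gg.unit (Gg.s g))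
  rw [Gg.inv_unit, Gg.mul_unit, Gg.unit_mul_unit, hθuu, hact.act_unit _ _ hp,
    AbGroupBundle.bmul_e_of_p_eq hp] at h
  exact AbGroupBundle.eq_e_of_bmul_self hp h

theorem θ_inv_left (hact : IsFiberwiseAction Gg KB act) (hθ : IsTwistingCocycle Gg KB act θ)
    (g : Hm) : θ (Gg.inv g) g = act (Gg.inv g) (θ g (Gg.inv g)) := by
  have hc : Gg.s g = Gg.r (Gg.inv g) := (Gg.r_inv g).symm
  have h := hθ.cocycle g (Gg.inv g) g hc (Gg.s_inv g)
  have hp : KB.p (act (Gg.inv g) (θ g (Gg.inv g))) = Gg.s g :=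
    (hact.p_act _ _ (hθ.p_θ g _ hc)).trans (Gg.r_inv g)
  rw [Gg.mul_inv, Gg.inv_mul, hθ.θ_unit_left, θ_unit_right hact hθ,
    AbGroupBundle.bmul_e_of_p_eq hp, AbGroupBundle.e_bmul_of_p_eq (hθ.p_θ _ _ (Gg.s_inv g))] at h
  exact h.symm

end IsTwistingCocycle

theorem boxMul_val (hact : IsFiberwiseAction Gg KB act) (hθ : IsTwistingCocycle Gg KB act θ)
    {a b : BoxW Gg KB} (hab : Gg.s a.val.1 = Gg.r b.val.1) :
    (boxMul Gg KB act θ a b).val = (Gg.mul a.val.1 b.val.1,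
      KB.bmul (KB.bmul (θ a.val.1 b.val.1) (act (Gg.inv b.val.1) a.val.2)) b.val.2) := by
  have hχ : KB.p (act (Gg.inv b.val.1) a.val.2) = Gg.s b.val.1 :=
    (hact.p_act _ _ (a.2.trans (hab.trans (Gg.s_inv _).symm))).trans (Gg.r_inv _)
  have hp : KB.p (KB.bmul (KB.bmul (θ a.val.1 b.val.1) (act (Gg.inv b.val.1) a.val.2))
      b.val.2) = Gg.s (Gg.mul a.val.1 b.val.1) := by
    rw [Gg.s_mul _ _ hab]
    exact AbGroupBundle.p_bmul_of_eq (AbGroupBundle.p_bmul_of_eq (hθ.p_θ _ _ hab) hχ) b.2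
  unfold boxMul
  exact congrArg Subtype.val (dif_pos ⟨hab, hp⟩)

theorem boxInv_val (hact : IsFiberwiseAction Gg KB act) (hθ : IsTwistingCocycle Gg KB act θ)
    (a : BoxW Gg KB) :
    (boxInv Gg KB act θ a).val = (Gg.inv a.val.1,
      KB.bmul (KB.binv (θ a.val.1 (Gg.inv a.val.1))) (act a.val.1 (KB.binv a.val.2))) := by
  have hp : KB.p (KB.bmul (KB.binv (θ a.val.1 (Gg.inv a.val.1)))
      (act a.val.1 (KB.binv a.val.2))) = Gg.s (Gg.inv a.val.1) := by
    rw [Gg.s_inv]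
    refine AbGroupBundle.p_bmul_of_eq ?_ (hact.p_act _ _ ((KB.p_binv _).trans a.2))
    rw [KB.p_binv, hθ.p_θ _ _ (Gg.r_inv _).symm, Gg.s_inv]
  unfold boxInv
  exact congrArg Subtype.val (dif_pos hp)

theorem boxMul_boxInv_val (hact : IsFiberwiseAction Gg KB act)
    (hθ : IsTwistingCocycle Gg KB act θ) (a : BoxW Gg KB) :
    (boxMul Gg KB act θ a (boxInv Gg KB act θ a)).val =
      (Gg.unit (Gg.r a.val.1), KB.e (Gg.r a.val.1)) := by
  have hinv := boxInv_val hact hθ a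
  have hc : Gg.s a.val.1 = Gg.r (boxInv Gg KB act θ a).val.1 := by rw [hinv, Gg.r_inv]
  rw [boxMul_val hact hθ hc, hinv]
  have hχ := a.2
  generalize a.val.2 = χ at hχ ⊢
  generalize a.val.1 = g at hχ ⊢
  rw [Gg.mul_inv, Gg.inv_inv, hact.act_binv hχ]
  let t : KB.Fiber (Gg.r g) :=
    ⟨θ g (Gg.inv g), (hθ.p_θ _ _ (Gg.r_inv g).symm).trans (Gg.s_inv g)⟩
  let c : KB.Fiber (Gg.r g) := ⟨act g χ, hact.p_act g χ hχ⟩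
  have h : t * c * (t⁻¹ * c⁻¹) = 1 := by
    rw [mul_mul_mul_comm, mul_inv_cancel, mul_inv_cancel, one_mul]
  exact Prod.ext rfl (congrArg Subtype.val h)

theorem boxInv_boxMul_val (hact : IsFiberwiseAction Gg KB act)
    (hθ : IsTwistingCocycle Gg KB act θ) (a : BoxW Gg KB) :
    (boxMul Gg KB act θ (boxInv Gg KB act θ a) a).val =
      (Gg.unit (Gg.s a.val.1), KB.e (Gg.s a.val.1)) := by
  have hinv := boxInv_val hact hθ a
  have hc : Gg.s (boxInv Gg KB act θ a).val.1 = Gg.r a.val.1 := by rw [hinv, Gg.s_inv]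
  rw [boxMul_val hact hθ hc, hinv]
  have hχ := a.2
  generalize a.val.2 = χ at hχ ⊢
  generalize a.val.1 = g at hχ ⊢
  have hχ' : KB.p (KB.binv χ) = Gg.s g := (KB.p_binv χ).trans hχ
  have ht : KB.p (θ g (Gg.inv g)) = Gg.s (Gg.inv g) := hθ.p_θ _ _ (Gg.r_inv g).symm
  rw [Gg.inv_mul, hact.act_bmul _ _ _ ((KB.p_binv _).trans ht)
      ((hact.p_act _ _ hχ').trans (Gg.s_inv g).symm),
    hact.act_binv ht, hact.act_inv_act hχ', ← hθ.θ_inv_left hact]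
  let t : KB.Fiber (Gg.s g) := ⟨θ (Gg.inv g) g, hθ.p_θ _ _ (Gg.s_inv g)⟩
  let c : KB.Fiber (Gg.s g) := ⟨χ, hχ⟩
  have h : t * (t⁻¹ * c⁻¹) * c = 1 := by group
  exact Prod.ext rfl (congrArg Subtype.val h)

theorem boxMul_of_val_eq_unit (hact : IsFiberwiseAction Gg KB act)
    (hθ : IsTwistingCocycle Gg KB act θ) {w a : BoxW Gg KB}
    (hw : w.val = (Gg.unit (Gg.r a.val.1), KB.e (Gg.r a.val.1))) :
    boxMul Gg KB act θ w a = a := by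
  have hc : Gg.s w.val.1 = Gg.r a.val.1 := by rw [hw, Gg.s_unit]
  have he : act (Gg.inv a.val.1) (KB.e (Gg.r a.val.1)) = KB.e (Gg.s a.val.1) := by
    simpa only [Gg.s_inv, Gg.r_inv] using hact.act_e (Gg.inv a.val.1)
  apply Subtype.ext
  rw [boxMul_val hact hθ hc, hw, Gg.unit_mul, hθ.θ_unit_left, he, AbGroupBundle.e_bmul_of_p_eq (KB.p_e _),
    AbGroupBundle.e_bmul_of_p_eq a.2]

theorem boxMul_assoc (hact : IsFiberwiseAction Gg KB act) (hθ : IsTwistingCocycle Gg KB act θ)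
    {a b c : BoxW Gg KB} (hab : Gg.s a.val.1 = Gg.r b.val.1)
    (hbc : Gg.s b.val.1 = Gg.r c.val.1) :
    boxMul Gg KB act θ (boxMul Gg KB act θ a b) c =
      boxMul Gg KB act θ a (boxMul Gg KB act θ b c) := by
  have hab_c : Gg.s (boxMul Gg KB act θ a b).val.1 = Gg.r c.val.1 := by
    rw [boxMul_val hact hθ hab, Gg.s_mul _ _ hab, hbc]
  have ha_bc : Gg.s a.val.1 = Gg.r (boxMul Gg KB act θ b c).val.1 := by
    rw [boxMul_val hact hθ hbc, Gg.r_mul _ _ hbc, hab]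
  apply Subtype.ext
  rw [boxMul_val hact hθ hab_c, boxMul_val hact hθ ha_bc, boxMul_val hact hθ hab,
    boxMul_val hact hθ hbc]
  have hχ := a.2
  have hν := b.2
  have hμ := c.2
  generalize a.val.2 = χ at hχ ⊢
  generalize b.val.2 = ν at hν ⊢
  generalize c.val.2 = μ at hμ ⊢
  generalize a.val.1 = g at hab hχ ⊢
  generalize b.val.1 = h at hab hbc hν ⊢
  generalize c.val.1 = k at hbc hμ ⊢
  have hs : ∀ {t : K}, KB.p t = Gg.r k → KB.p t = Gg.s (Gg.inv k) :=
    fun ht => ht.trans (Gg.s_inv k).symm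
  have hθgh : KB.p (θ g h) = Gg.r k := (hθ.p_θ _ _ hab).trans hbc
  have hχ' : KB.p (act (Gg.inv h) χ) = Gg.r k :=
    ((hact.p_act _ _ (hχ.trans (hab.trans (Gg.s_inv h).symm))).trans (Gg.r_inv h)).trans hbc
  have hν' : KB.p ν = Gg.r k := hν.trans hbc
  rw [Gg.mul_assoc _ _ _ hab hbc,
    hact.act_bmul _ _ _ (hs (AbGroupBundle.p_bmul_of_eq hθgh hχ')) (hs hν'),
    hact.act_bmul _ _ _ (hs hθgh) (hs hχ'), Gg.mul_inv_rev hbc,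
    hact.act_mul _ _ _ (by rw [Gg.s_inv, Gg.r_inv, hbc])
      (hχ.trans (hab.trans (Gg.s_inv h).symm))]
  have hinv : ∀ {t : K}, KB.p t = Gg.r k → KB.p (act (Gg.inv k) t) = Gg.s k :=
    fun ht => (hact.p_act _ _ (hs ht)).trans (Gg.r_inv k)
  let P : KB.Fiber (Gg.s k) := ⟨θ (Gg.mul g h) k, hθ.p_θ _ _ ((Gg.s_mul _ _ hab).trans hbc)⟩
  let Q : KB.Fiber (Gg.s k) := ⟨act (Gg.inv k) (θ g h), hinv hθgh⟩
  let R : KB.Fiber (Gg.s k) := ⟨act (Gg.inv k) (act (Gg.inv h) χ), hinv hχ'⟩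
  let S : KB.Fiber (Gg.s k) := ⟨act (Gg.inv k) ν, hinv hν'⟩
  let T : KB.Fiber (Gg.s k) := ⟨μ, hμ⟩
  let U : KB.Fiber (Gg.s k) :=
    ⟨θ g (Gg.mul h k), (hθ.p_θ _ _ (hab.trans (Gg.r_mul _ _ hbc).symm)).trans (Gg.s_mul _ _ hbc)⟩
  let V : KB.Fiber (Gg.s k) := ⟨θ h k, hθ.p_θ _ _ hbc⟩
  have hcocycle : Q * P = U * V := Subtype.ext (hθ.cocycle g h k hab hbc)
  exact Prod.ext rfl
    (congrArg Subtype.val (mul_mul_mul_eq_of_mul_eq (r := R) (s := S) (t := T) hcocycle))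

end TwistedProduct

theorem prop59_general {Hm : Type u} {X : Type v} {K : Type w}
    (Gg : RawGroupoid Hm X) (KB : AbGroupBundle K X)
    (act : Hm → K → K)
    -- `g ⋄ (−)` maps `K_{s(g)}` to `K_{r(g)}` …
    (hact_fib : ∀ g χ, KB.p χ = Gg.s g → KB.p (act g χ) = Gg.r g)
    -- … multiplicatively …
    (hact_mul : ∀ g χ χ', KB.p χ = Gg.s g → KB.p χ' = Gg.s g →
      act g (KB.bmul χ χ') = KB.bmul (act g χ) (act g χ'))
    -- `⋄` is an action
    (hact_comp : ∀ g h χ, Gg.s g = Gg.r h → KB.p χ = Gg.s h →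
      act (Gg.mul g h) χ = act g (act h χ))
    (hact_unit : ∀ (x : X) χ, KB.p χ = x → act (Gg.unit x) χ = χ)
    (θ : Hm → Hm → K)
    -- `θ(g,h) ∈ K_{s(h)}` for composable `(g,h)`
    (hθ_fib : ∀ g h, Gg.s g = Gg.r h → KB.p (θ g h) = Gg.s h)
    -- `θ(r(g),g) = 1_{K_{s(g)}}`
    (hθ_unit : ∀ g, θ (Gg.unit (Gg.r g)) g = KB.e (Gg.s g))
    -- the cocycle-type identity `((k⁻¹)⋄θ(g,h))·θ(gh,k) = θ(g,hk)·θ(h,k)`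
    (hθ_cocycle : ∀ g h k, Gg.s g = Gg.r h → Gg.s h = Gg.r k →
      KB.bmul (act (Gg.inv k) (θ g h)) (θ (Gg.mul g h) k) =
        KB.bmul (θ g (Gg.mul h k)) (θ h k)) :
    -- associativity wherever defined
    (∀ a b c : BoxW Gg KB, Gg.s a.val.1 = Gg.r b.val.1 → Gg.s b.val.1 = Gg.r c.val.1 →
        boxMul Gg KB act θ (boxMul Gg KB act θ a b) c =
          boxMul Gg KB act θ a (boxMul Gg KB act θ b c)) ∧
    -- `(g,χ)·(g,χ)⁻¹·(g,χ) = (g,χ)`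
    (∀ a : BoxW Gg KB,
        boxMul Gg KB act θ (boxMul Gg KB act θ a (boxInv Gg KB act θ a)) a = a) ∧
    -- the unit space of `𝒢 ⊠_θ K` is `{(x, 1_{K_x}) : x ∈ X}`
    ({w : BoxW Gg KB | ∃ a : BoxW Gg KB, w = boxMul Gg KB act θ a (boxInv Gg KB act θ a)} =
      {w : BoxW Gg KB | ∃ x : X, w.val.1 = Gg.unit x ∧ w.val.2 = KB.e x}) ∧
    -- range and source: `r(g,χ) = r(g)` and `s(g,χ) = s(g)`
    (∀ a : BoxW Gg KB,
        (boxMul Gg KB act θ a (boxInv Gg KB act θ a)).val =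
          (Gg.unit (Gg.r a.val.1), KB.e (Gg.r a.val.1)) ∧
        (boxMul Gg KB act θ (boxInv Gg KB act θ a) a).val =
          (Gg.unit (Gg.s a.val.1), KB.e (Gg.s a.val.1))) := by
  have hact : IsFiberwiseAction Gg KB act := ⟨hact_fib, hact_mul, hact_comp, hact_unit⟩
  have hθ : IsTwistingCocycle Gg KB act θ := ⟨hθ_fib, hθ_unit, hθ_cocycle⟩
  refine ⟨fun a b c => boxMul_assoc hact hθ,
    fun a => boxMul_of_val_eq_unit hact hθ (boxMul_boxInv_val hact hθ a), ?_,
    fun a => ⟨boxMul_boxInv_val hact hθ a, boxInv_boxMul_val hact hθ a⟩⟩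
  ext w
  constructor
  · rintro ⟨a, rfl⟩
    exact ⟨Gg.r a.val.1, Prod.ext_iff.mp (boxMul_boxInv_val hact hθ a)⟩
  · rintro ⟨x, hw₁, hw₂⟩
    refine ⟨w, Subtype.ext ?_⟩
    rw [boxMul_boxInv_val hact hθ w, hw₁, Gg.r_unit]
    exact Prod.ext hw₁ hw₂

/-- Proposition 5.9 (algebraic part): given a groupoid `𝒢` with unit space `X`, a bundle `K` of
abelian groups over `X`, an action `⋄` of `𝒢` on `K` by group isomorphisms, and `θ` assigning to
each composable pair `(g,h)` an element `θ(g,h) ∈ K_{s(h)}` with `θ(r(g),g) = 1` and satisfying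
the cocycle-type identity, the set `𝒢 ⊠_θ K` with the product
`(g,χ)(h,ν) = (gh, θ(g,h)·((h⁻¹)⋄χ)·ν)` and inverse `(g,χ)⁻¹ = (g⁻¹, θ(g,g⁻¹)⁻¹·(g⋄χ⁻¹))` is a
groupoid: the product is associative wherever defined, `(g,χ)(g,χ)⁻¹(g,χ) = (g,χ)`, the unit
space is `{(x, 1_{K_x}) : x ∈ X}` (identified with `X`), and under this identification
`r(g,χ) = r(g)` and `s(g,χ) = s(g)`. -/
theorem prop59 {Hm : Type u} {X : Type v} {K : Type w}
    (Gg : RawGroupoid Hm X) (KB : AbGroupBundle K X)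
    (act : Hm → K → K)
    -- `g ⋄ (−)` maps `K_{s(g)}` to `K_{r(g)}` …
    (hact_fib : ∀ g χ, KB.p χ = Gg.s g → KB.p (act g χ) = Gg.r g)
    -- … multiplicatively …
    (hact_mul : ∀ g χ χ', KB.p χ = Gg.s g → KB.p χ' = Gg.s g →
      act g (KB.bmul χ χ') = KB.bmul (act g χ) (act g χ'))
    -- … and bijectively (a group isomorphism `K_{s(g)} ≃ K_{r(g)}`)
    (hact_inj : ∀ g χ χ', KB.p χ = Gg.s g → KB.p χ' = Gg.s g → act g χ = act g χ' → χ = χ')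
    (hact_surj : ∀ g ν, KB.p ν = Gg.r g → ∃ χ, KB.p χ = Gg.s g ∧ act g χ = ν)
    -- `⋄` is an action
    (hact_comp : ∀ g h χ, Gg.s g = Gg.r h → KB.p χ = Gg.s h →
      act (Gg.mul g h) χ = act g (act h χ))
    (hact_unit : ∀ (x : X) χ, KB.p χ = x → act (Gg.unit x) χ = χ)
    (θ : Hm → Hm → K)
    -- `θ(g,h) ∈ K_{s(h)}` for composable `(g,h)`
    (hθ_fib : ∀ g h, Gg.s g = Gg.r h → KB.p (θ g h) = Gg.s h)
    -- `θ(r(g),g) = 1_{K_{s(g)}}`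
    (hθ_unit : ∀ g, θ (Gg.unit (Gg.r g)) g = KB.e (Gg.s g))
    -- the cocycle-type identity `((k⁻¹)⋄θ(g,h))·θ(gh,k) = θ(g,hk)·θ(h,k)`
    (hθ_cocycle : ∀ g h k, Gg.s g = Gg.r h → Gg.s h = Gg.r k →
      KB.bmul (act (Gg.inv k) (θ g h)) (θ (Gg.mul g h) k) =
        KB.bmul (θ g (Gg.mul h k)) (θ h k)) :
    -- associativity wherever defined
    (∀ a b c : BoxW Gg KB, Gg.s a.val.1 = Gg.r b.val.1 → Gg.s b.val.1 = Gg.r c.val.1 →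
        boxMul Gg KB act θ (boxMul Gg KB act θ a b) c =
          boxMul Gg KB act θ a (boxMul Gg KB act θ b c)) ∧
    -- `(g,χ)·(g,χ)⁻¹·(g,χ) = (g,χ)`
    (∀ a : BoxW Gg KB,
        boxMul Gg KB act θ (boxMul Gg KB act θ a (boxInv Gg KB act θ a)) a = a) ∧
    -- the unit space of `𝒢 ⊠_θ K` is `{(x, 1_{K_x}) : x ∈ X}`
    ({w : BoxW Gg KB | ∃ a : BoxW Gg KB, w = boxMul Gg KB act θ a (boxInv Gg KB act θ a)} =
      {w : BoxW Gg KB | ∃ x : X, w.val.1 = Gg.unit x ∧ w.val.2 = KB.e x}) ∧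
    -- range and source: `r(g,χ) = r(g)` and `s(g,χ) = s(g)`
    (∀ a : BoxW Gg KB,
        (boxMul Gg KB act θ a (boxInv Gg KB act θ a)).val =
          (Gg.unit (Gg.r a.val.1), KB.e (Gg.r a.val.1)) ∧
        (boxMul Gg KB act θ (boxInv Gg KB act θ a) a).val =
          (Gg.unit (Gg.s a.val.1), KB.e (Gg.s a.val.1))) :=
  prop59_general Gg KB act hact_fib hact_mul hact_comp hact_unit θ hθ_fib hθ_unit hθ_cocycle
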